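/- arXiv:2604.09893 — 2 statements merged into one kernel-verified Lean document; each statement's English description precedes it below -/
import Mathlib

section
/- Let $0 < x < 1$ and $s$ be fixed reals, and let $h_a(c)$ be the quintic $3x(sx-2) + (21 - 3a - 3sx + 3x^2 + ax^2)c + 4x(a - 9 - sx)c^2 + 4(a + sx + 6x^2 - ax^2)c^3 + x(sx - 6 - 4a)c^4 + (3 - a - sx - 3x^2 + 3ax^2)c^5$. Then there exists $N > 0$ such that for all $a > N$, $h_a$ has at least three distinct roots in the interval $(-1,1)$: one in $(-1,-1/2)$, one in $(-1/2,1/2)$, and one in $(1/2,1)$. -/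
/-!
The values `h_a(-1) = -24 (1 + x)²` and `h_a(1) = 24 (1 - x)²` do not depend on `a`, while
`h_a(∓1/2)` are affine in `a` with slopes `±(3/32)(11 + 8x - x²)`, which are nonzero for
`0 < x < 1`. Hence for large `a` the signs at `-1, -1/2, 1/2, 1` alternate `-, +, -, +`, and the
intermediate value theorem gives a root in each of the three intervals.
-/

open Filter Set

def quintic (s x a c : ℝ) : ℝ :=
  3*x*(s*x-2) + (21 - 3*a - 3*s*x + 3*x^2 + a*x^2)*c
    + 4*x*(a - 9 - s*x)*c^2 + 4*(a + s*x + 6*x^2 - a*x^2)*c^3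
    + x*(s*x - 6 - 4*a)*c^4 + (3 - a - s*x - 3*x^2 + 3*a*x^2)*c^5

theorem exists_mem_Ioo_eq_zero {f : ℝ → ℝ} (hf : Continuous f) {u v : ℝ} (huv : u ≤ v)
    (hsign : f u < 0 ∧ 0 < f v ∨ 0 < f u ∧ f v < 0) : ∃ c, u < c ∧ c < v ∧ f c = 0 := by
  suffices (0 : ℝ) ∈ f '' Ioo u v by
    obtain ⟨c, ⟨huc, hcv⟩, hc⟩ := this
    exact ⟨c, huc, hcv, hc⟩
  rcases hsign with hsign | hsign
  · exact intermediate_value_Ioo huv hf.continuousOn hsign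
  · exact intermediate_value_Ioo' huv hf.continuousOn hsign.symm

theorem eventually_pos_add_mul_atTop (p : ℝ) {q : ℝ} (hq : 0 < q) :
    ∀ᶠ a in atTop, 0 < p + a * q :=
  (tendsto_atTop_add_const_left atTop p (tendsto_id.atTop_mul_const hq)).eventually_gt_atTop 0

namespace quintic

variable (s : ℝ) {x : ℝ} (a : ℝ)

theorem continuous (x : ℝ) : Continuous (quintic s x a) := by
  unfold quintic
  fun_prop

theorem one_pos (hx1 : x < 1) : 0 < quintic s x a 1 := by
  have h : quintic s x a 1 = 24 * (1 - x)^2 := by unfold quintic; ring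
  rw [h]
  nlinarith

theorem neg_one_neg (hx0 : 0 < x) : quintic s x a (-1) < 0 := by
  have h : quintic s x a (-1) = -(24 * (1 + x)^2) := by unfold quintic; ring
  rw [h]
  nlinarith

theorem half_eq (x : ℝ) :
    quintic s x a (1/2) = quintic s x 0 (1/2) - a * (3/32 * (11 - 8*x - x^2)) := by
  unfold quintic; ring

theorem neg_half_eq (x : ℝ) :
    quintic s x a (-1/2) = quintic s x 0 (-1/2) + a * (3/32 * (11 + 8*x - x^2)) := by
  unfold quintic; ring

theorem eventually_half_neg (hx0 : 0 < x) (hx1 : x < 1) :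
    ∀ᶠ a in atTop, quintic s x a (1/2) < 0 := by
  have hslope : 0 < 3/32 * (11 - 8*x - x^2) := by nlinarith
  filter_upwards [eventually_pos_add_mul_atTop (-quintic s x 0 (1/2)) hslope] with a ha
  rw [half_eq]
  linarith

theorem eventually_neg_half_pos (hx0 : 0 < x) (hx1 : x < 1) :
    ∀ᶠ a in atTop, 0 < quintic s x a (-1/2) := by
  have hslope : 0 < 3/32 * (11 + 8*x - x^2) := by nlinarith
  filter_upwards [eventually_pos_add_mul_atTop (quintic s x 0 (-1/2)) hslope] with a ha
  rwa [neg_half_eq]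

end quintic

theorem stmt3 (s x : ℝ) (hx0 : 0 < x) (hx1 : x < 1)
    (h : ℝ → ℝ → ℝ)
    (hdef : ∀ a c, h a c = 3*x*(s*x-2) + (21 - 3*a - 3*s*x + 3*x^2 + a*x^2)*c
      + 4*x*(a - 9 - s*x)*c^2 + 4*(a + s*x + 6*x^2 - a*x^2)*c^3
      + x*(s*x - 6 - 4*a)*c^4 + (3 - a - s*x - 3*x^2 + 3*a*x^2)*c^5) :
    ∃ N : ℝ, N > 0 ∧ ∀ a > N,
      (∃ c₁, -1 < c₁ ∧ c₁ < -1/2 ∧ h a c₁ = 0) ∧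
      (∃ c₂, -1/2 < c₂ ∧ c₂ < 1/2 ∧ h a c₂ = 0) ∧
      (∃ c₃, 1/2 < c₃ ∧ c₃ < 1 ∧ h a c₃ = 0) := by
  obtain rfl : h = quintic s x := funext fun a => funext (hdef a)
  obtain ⟨N, hN⟩ := eventually_atTop.1 <|
    (quintic.eventually_neg_half_pos s hx0 hx1).and (quintic.eventually_half_neg s hx0 hx1)
  refine ⟨max N 1, lt_max_of_lt_right one_pos, fun a ha => ?_⟩
  obtain ⟨hneg_half, hhalf⟩ := hN a (le_of_max_le_left ha.le)
  have hf := quintic.continuous s a x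
  exact ⟨exists_mem_Ioo_eq_zero hf (by norm_num) (.inl ⟨quintic.neg_one_neg s a hx0, hneg_half⟩),
    exists_mem_Ioo_eq_zero hf (by norm_num) (.inr ⟨hneg_half, hhalf⟩),
    exists_mem_Ioo_eq_zero hf (by norm_num) (.inl ⟨hhalf, quintic.one_pos s a hx1⟩)⟩
end

section
/- For fixed $x \in (0,1)$ and $a, c$ real with $c \in (0,1)$, $c \neq x$, define $g(x,z) = 2(1-x)(3 + c^2 - 3cz + c^3 z - 2c^2 z^2) + x(1-c)(1+z)\big((3(1-c) + ac(1+c))(1-z) + (3 - c^2)(1+z)\big)$. If $a > 0$, then $g(0,z) > 0$ and $g(1,z) > 0$ for all $z \in (-1,1)$, and consequently $g(x,z) > 0$ for all $x \in (0,1)$ and $z \in (-1,1)$. -/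
/-! Both endpoint values of the affine function `x ↦ g x z` are positive, hence so is every
convex combination of them. At `x = 0` the quadratic in `z` is its chord through `z = ±1`
plus the nonnegative bump `2c²(1 - z²)`; at `x = 1` every factor is positive. -/

lemma quadratic_eq_chord_add (c z : ℝ) :
    3 + c^2 - 3*c*z + c^3*z - 2*c^2*z^2 = (3 - c^2) * (1 - c*z) + 2*c^2*(1 - z^2) := by
  ring

lemma quadratic_pos {c z : ℝ} (hc : |c| < 1) (hz : |z| ≤ 1) :
    0 < 3 + c^2 - 3*c*z + c^3*z - 2*c^2*z^2 := by
  have hc2 : c^2 < 1 := sq_lt_one_iff_abs_lt_one c |>.mpr hc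
  have hz2 : z^2 ≤ 1 := sq_le_one_iff_abs_le_one z |>.mpr hz
  have hcz : c*z < 1 := by
    calc c*z ≤ |c*z| := le_abs_self _
      _ = |c| * |z| := abs_mul c z
      _ < 1 := by nlinarith [abs_nonneg c, abs_nonneg z]
  rw [quadratic_eq_chord_add]
  have : 0 < (3 - c^2) * (1 - c*z) := mul_pos (by linarith) (by linarith)
  nlinarith [sq_nonneg c]

lemma product_pos {a c z : ℝ} (ha : 0 ≤ a) (hc0 : 0 ≤ c) (hc1 : c < 1)
    (hz0 : -1 < z) (hz1 : z < 1) :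
    0 < (1-c)*(1+z)*((3*(1-c) + a*c*(1+c))*(1-z) + (3 - c^2)*(1+z)) := by
  have hlin : 0 ≤ 3*(1-c) + a*c*(1+c) := by
    have : 0 ≤ 1 - c := by linarith
    positivity
  have hsq : 0 < 3 - c^2 := by nlinarith
  have : 0 < (3*(1-c) + a*c*(1+c))*(1-z) + (3 - c^2)*(1+z) :=
    add_pos_of_nonneg_of_pos (mul_nonneg hlin (by linarith)) (mul_pos hsq (by linarith))
  exact mul_pos (mul_pos (by linarith) (by linarith)) this

theorem stmt7 (a c : ℝ) (ha : 0 < a) (hc0 : 0 < c) (hc1 : c < 1)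
    (g : ℝ → ℝ → ℝ)
    (hg : ∀ x z, g x z = 2*(1-x)*(3 + c^2 - 3*c*z + c^3*z - 2*c^2*z^2)
      + x*(1-c)*(1+z)*((3*(1-c) + a*c*(1+c))*(1-z) + (3 - c^2)*(1+z))) :
    (∀ z, -1 < z → z < 1 → g 0 z > 0) ∧
    (∀ z, -1 < z → z < 1 → g 1 z > 0) ∧
    (∀ x z, 0 < x → x < 1 → -1 < z → z < 1 → g x z > 0) := by
  have hc : |c| < 1 := abs_lt.mpr ⟨by linarith, hc1⟩
  have hg0 : ∀ z, -1 < z → z < 1 → g 0 z > 0 := fun z hz0 hz1 => by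
    have := quadratic_pos hc (abs_le.mpr ⟨hz0.le, hz1.le⟩)
    rw [hg]; linarith
  have hg1 : ∀ z, -1 < z → z < 1 → g 1 z > 0 := fun z hz0 hz1 => by
    have := product_pos ha.le hc0.le hc1 hz0 hz1
    rw [hg]; linarith
  refine ⟨hg0, hg1, fun x z hx0 hx1 hz0 hz1 => ?_⟩
  have haffine : g x z = (1 - x) • g 0 z + x • g 1 z := by
    simp only [hg, smul_eq_mul]; ring
  rw [haffine]
  exact convex_Ioi (0 : ℝ) (hg0 z hz0 hz1) (hg1 z hz0 hz1) (by linarith) hx0.le (by ring)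
end
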